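/- arXiv:1601.05685 — 4 statements merged into one kernel-verified Lean document; each statement's English description precedes it below -/
import Mathlib

section
/- The derivative λ' is strictly convex on (0, 1] and strictly concave on [1, ∞); in fact λ'''(x) = 3(1 + 5x² − 5x⁴ − x⁶)/(8(x + x³)^{5/2}), so λ'''(x) > 0 for 0 < x < 1, λ'''(1) = 0, and λ'''(x) < 0 for x > 1. -/
/-!
With `λ² = x + x³`, every derivative of `λ` has the form `p(x) / λ(x)ᵏ` with `p` a polynomial,
and differentiating such a quotient only raises `k` by two. Three differentiations give
`λ''' = 3(1 + 5x² − 5x⁴ − x⁶) / (8λ⁵)`, whose numerator factors as `(1 − x²)(1 + 6x² + x⁴)`,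
so its sign is that of `1 − x`. The convexity statements are the second-derivative test
applied to `λ'`.
-/

noncomputable section

open Real Set

def lam (x : ℝ) : ℝ := Real.sqrt (x + x ^ 3)

lemma lam_pos {x : ℝ} (hx : 0 < x) : 0 < lam x := Real.sqrt_pos.2 (by positivity)

lemma lam_sq {x : ℝ} (hx : 0 ≤ x) : lam x ^ 2 = x + x ^ 3 := Real.sq_sqrt (by positivity)

lemma hasDerivAt_lam {x : ℝ} (hx : 0 < x) :
    HasDerivAt lam ((1 + 3 * x ^ 2) / (2 * lam x)) x := by
  have hu : HasDerivAt (fun y : ℝ => y + y ^ 3) (1 + 3 * x ^ 2) x :=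
    ((hasDerivAt_id' x).add (hasDerivAt_pow 3 x)).congr_deriv (by norm_num)
  exact hu.sqrt (by positivity)

lemma HasDerivAt.div_lam_pow {p : ℝ → ℝ} {p' x : ℝ} (hp : HasDerivAt p p' x) (hx : 0 < x)
    (k : ℕ) :
    HasDerivAt (fun y => p y / lam y ^ k)
      ((2 * p' * (x + x ^ 3) - k * p x * (1 + 3 * x ^ 2)) / (2 * lam x ^ (k + 2))) x := by
  have hlam := lam_pos hx
  have hpow : HasDerivAt (fun y => lam y ^ k)
      (k * lam x ^ (k - 1) * ((1 + 3 * x ^ 2) / (2 * lam x))) x := (hasDerivAt_lam hx).pow k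
  refine (hp.div hpow (by positivity)).congr_deriv ?_
  rw [← lam_sq hx.le]
  cases k with
  | zero => field_simp; ring
  | succ n => push_cast; field_simp; ring

lemma hasDerivAt_deriv_lam {x : ℝ} (hx : 0 < x) :
    HasDerivAt (deriv lam) ((3 * x ^ 4 + 6 * x ^ 2 - 1) / (4 * lam x ^ 3)) x := by
  have hderiv : deriv lam =ᶠ[nhds x] fun y => (1 + 3 * y ^ 2) / 2 / lam y ^ 1 := by
    filter_upwards [Ioi_mem_nhds hx] with y hy
    rw [(hasDerivAt_lam hy).deriv]
    ring
  have hp : HasDerivAt (fun y : ℝ => (1 + 3 * y ^ 2) / 2) (3 * x) x :=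
    ((((hasDerivAt_pow 2 x).const_mul 3).const_add 1).div_const 2).congr_deriv
      (by push_cast; ring)
  refine ((hp.div_lam_pow hx 1).congr_of_eventuallyEq hderiv).congr_deriv ?_
  have hlam := lam_pos hx
  field_simp
  ring

lemma hasDerivAt_deriv_deriv_lam {x : ℝ} (hx : 0 < x) :
    HasDerivAt (deriv (deriv lam))
      (3 * (1 + 5 * x ^ 2 - 5 * x ^ 4 - x ^ 6) / (8 * lam x ^ 5)) x := by
  have hderiv2 : deriv (deriv lam) =ᶠ[nhds x]
      fun y => (3 * y ^ 4 + 6 * y ^ 2 - 1) / 4 / lam y ^ 3 := by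
    filter_upwards [Ioi_mem_nhds hx] with y hy
    rw [(hasDerivAt_deriv_lam hy).deriv]
    ring
  have hp : HasDerivAt (fun y : ℝ => (3 * y ^ 4 + 6 * y ^ 2 - 1) / 4) (3 * x ^ 3 + 3 * x) x :=
    ((((hasDerivAt_pow 4 x).const_mul 3).add
      ((hasDerivAt_pow 2 x).const_mul 6)).sub_const 1).div_const 4 |>.congr_deriv
      (by push_cast; ring)
  refine ((hp.div_lam_pow hx 3).congr_of_eventuallyEq hderiv2).congr_deriv ?_
  have hlam := lam_pos hx
  field_simp
  ring

lemma deriv_deriv_deriv_lam {x : ℝ} (hx : 0 < x) :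
    deriv (deriv (deriv lam)) x = 3 * (1 + 5 * x ^ 2 - 5 * x ^ 4 - x ^ 6) / (8 * lam x ^ 5) :=
  (hasDerivAt_deriv_deriv_lam hx).deriv

lemma continuousOn_deriv_lam : ContinuousOn (deriv lam) (Ioi 0) :=
  fun _ hx => (hasDerivAt_deriv_lam hx).continuousAt.continuousWithinAt

lemma deriv_deriv_deriv_lam_pos {x : ℝ} (hx : 0 < x) (hx1 : x < 1) :
    0 < deriv (deriv (deriv lam)) x := by
  rw [deriv_deriv_deriv_lam hx]
  have hlam := lam_pos hx
  have hnum : 0 < (1 - x ^ 2) * (1 + 6 * x ^ 2 + x ^ 4) :=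
    mul_pos (by nlinarith) (by positivity)
  exact div_pos (by linarith) (by positivity)

lemma deriv_deriv_deriv_lam_neg {x : ℝ} (hx1 : 1 < x) :
    deriv (deriv (deriv lam)) x < 0 := by
  have hx : 0 < x := one_pos.trans hx1
  rw [deriv_deriv_deriv_lam hx]
  have hlam := lam_pos hx
  have hnum : 0 < (x ^ 2 - 1) * (1 + 6 * x ^ 2 + x ^ 4) :=
    mul_pos (by nlinarith) (by positivity)
  exact div_neg_of_neg_of_pos (by linarith) (by positivity)

/-- λ''' has the stated formula, is positive on (0,1), vanishes at 1 and is negative on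
(1, ∞); consequently λ' is strictly convex on (0, 1] and strictly concave on [1, ∞). -/
theorem stmt2 :
    (∀ x : ℝ, 0 < x → deriv (deriv (deriv lam)) x =
      3 * (1 + 5 * x ^ 2 - 5 * x ^ 4 - x ^ 6) / (8 * (x + x ^ 3) ^ ((5 : ℝ) / 2))) ∧
    (∀ x : ℝ, 0 < x → x < 1 → 0 < deriv (deriv (deriv lam)) x) ∧
    deriv (deriv (deriv lam)) 1 = 0 ∧
    (∀ x : ℝ, 1 < x → deriv (deriv (deriv lam)) x < 0) ∧
    StrictConvexOn ℝ (Ioc 0 1) (deriv lam) ∧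
    StrictConcaveOn ℝ (Ici 1) (deriv lam) := by
  refine ⟨fun x hx => ?_, fun x hx hx1 => deriv_deriv_deriv_lam_pos hx hx1, ?_,
    fun x hx1 => deriv_deriv_deriv_lam_neg hx1, ?_, ?_⟩
  · rw [deriv_deriv_deriv_lam hx, rpow_div_two_eq_sqrt _ (by positivity), ← lam,
      show (5 : ℝ) = (5 : ℕ) by norm_num, rpow_natCast]
  · rw [deriv_deriv_deriv_lam one_pos]
    norm_num
  · refine strictConvexOn_of_deriv2_pos (convex_Ioc 0 1)
      (continuousOn_deriv_lam.mono fun y hy => hy.1) fun y hy => ?_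
    rw [interior_Ioc] at hy
    exact deriv_deriv_deriv_lam_pos hy.1 hy.2
  · refine strictConcaveOn_of_deriv2_neg (convex_Ici 1)
      (continuousOn_deriv_lam.mono fun y hy => mem_Ioi.2 (one_pos.trans_le hy)) fun y hy => ?_
    rw [interior_Ici] at hy
    exact deriv_deriv_deriv_lam_neg hy

end
end

section
/- There is a unique function b : [γ₀, ∞) → (0, γ₀] such that λ'(b(a)) = λ'(a) for every a ≥ γ₀ (necessarily b(γ₀) = γ₀). This function is continuous on [γ₀, ∞), smooth and strictly decreasing on (γ₀, ∞), and satisfies: −1 ≤ b'(a) ≤ −b(a)/a for all a > γ₀; the map a ↦ a + b(a) is increasing on [γ₀, ∞); and there is a constant C ≥ 1 such that for all a > γ₀: C⁻¹/a ≤ b(a) ≤ C/a, C⁻¹/a² ≤ −b'(a) ≤ C/a², and C⁻¹(a − γ₀)/a ≤ b'(a) + 1 ≤ C(a − γ₀)/a. -/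
/-!
`lam` is the gravity–capillary dispersion relation λ(x) = √(x + x³) (with g = σ = 1);
λ' denotes its derivative on (0, ∞); `gamma0` is γ₀ = √((2√3 − 3)/3).
-/

noncomputable section

open Real Set

/-- γ₀ = √((2√3 − 3)/3). -/
def gamma0 : ℝ := Real.sqrt ((2 * Real.sqrt 3 - 3) / 3)

namespace S5

lemma sqrt3_sq : Real.sqrt 3 ^ 2 = 3 := Real.sq_sqrt (by norm_num)
lemma sqrt3_lb : 1.732 < Real.sqrt 3 := by nlinarith [sqrt3_sq, Real.sqrt_nonneg 3]
lemma sqrt3_ub : Real.sqrt 3 < 1.7321 := by nlinarith [sqrt3_sq, Real.sqrt_nonneg 3]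
lemma gamma0_sq : gamma0 ^ 2 = (2 * Real.sqrt 3 - 3) / 3 :=
  Real.sq_sqrt (by nlinarith [sqrt3_lb])
lemma gamma0_nonneg : 0 ≤ gamma0 := Real.sqrt_nonneg _
lemma gamma0_lb : 0.393 < gamma0 := by nlinarith [gamma0_sq, sqrt3_lb, gamma0_nonneg]
lemma gamma0_ub : gamma0 < 0.3934 := by nlinarith [gamma0_sq, sqrt3_ub, gamma0_nonneg]
lemma gamma0_pos : 0 < gamma0 := lt_trans (by norm_num) gamma0_lb
lemma u_quad : 3 * (gamma0^2)^2 + 6 * gamma0^2 - 1 = 0 := by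
  rw [gamma0_sq]; nlinarith [sqrt3_sq]
def g (x : ℝ) : ℝ := (1 + 3*x^2) / (2 * Real.sqrt (x + x^3))
def g' (x : ℝ) : ℝ := (3*x^4 + 6*x^2 - 1) / (4 * (x + x^3) * Real.sqrt (x + x^3))

lemma q_pos {x : ℝ} (hx : 0 < x) : 0 < x + x^3 := by positivity
lemma sq_pos {x : ℝ} (hx : 0 < x) : 0 < Real.sqrt (x + x^3) := Real.sqrt_pos.2 (q_pos hx)
lemma sq_sq {x : ℝ} (hx : 0 < x) : Real.sqrt (x + x^3) ^ 2 = x + x^3 :=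
  Real.sq_sqrt (q_pos hx).le

lemma hasDerivAt_q (x : ℝ) : HasDerivAt (fun y : ℝ => y + y^3) (1 + 3*x^2) x := by
  simpa [Pi.add_def] using (hasDerivAt_id' x).add (hasDerivAt_pow 3 x)

lemma hasDerivAt_lam {x : ℝ} (hx : 0 < x) : HasDerivAt lam (g x) x := by
  have h := (Real.hasDerivAt_sqrt (q_pos hx).ne').comp x (hasDerivAt_q x)
  refine h.congr_deriv ?_
  unfold g
  field_simp

lemma deriv_lam {x : ℝ} (hx : 0 < x) : deriv lam x = g x := (hasDerivAt_lam hx).deriv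

lemma hasDerivAt_g {x : ℝ} (hx : 0 < x) : HasDerivAt g (g' x) x := by
  have hs := sq_pos hx
  have hq := q_pos hx
  have h2 := sq_sq hx
  have hnum : HasDerivAt (fun y : ℝ => 1 + 3*y^2) (6*x) x := by
    have := ((hasDerivAt_pow 2 x).const_mul 3).const_add 1
    refine this.congr_deriv ?_
    push_cast; ring
  have hden : HasDerivAt (fun y : ℝ => 2 * Real.sqrt (y + y^3))
      (2 * (1 / (2 * Real.sqrt (x + x^3)) * (1 + 3*x^2))) x :=
    ((Real.hasDerivAt_sqrt (q_pos hx).ne').comp x (hasDerivAt_q x)).const_mul 2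
  have h := hnum.div hden (by positivity)
  refine h.congr_deriv ?_
  unfold g'
  generalize Real.sqrt (x+x^3) = S at *
  rw [div_eq_div_iff (by positivity) (by positivity)]
  field_simp
  linear_combination (48*x^2*(1+x^2) - 4*(3*x^4+6*x^2-1)) * h2

lemma contDiffAt_g {x : ℝ} (hx : 0 < x) : ContDiffAt ℝ (⊤ : ℕ∞) g x := by
  have h1 : ContDiffAt ℝ (⊤ : ℕ∞) (fun y : ℝ => y + y^3) x := by fun_prop
  have h2 : ContDiffAt ℝ (⊤ : ℕ∞) (fun y : ℝ => Real.sqrt (y + y^3)) x :=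
    (Real.contDiffAt_sqrt (q_pos hx).ne').comp x h1
  exact ContDiffAt.div (by fun_prop) (contDiffAt_const.mul h2)
    (mul_pos two_pos (sq_pos hx)).ne'


lemma P_neg {x : ℝ} (hx : 0 < x) (hxg : x < gamma0) : 3*x^4 + 6*x^2 - 1 < 0 := by
  have hx2 : x^2 < gamma0^2 := by nlinarith [gamma0_pos]
  have key : 0 < (gamma0^2 - x^2) * (3*x^2 + 3*gamma0^2 + 6) := by
    apply mul_pos (by linarith) (by positivity)
  nlinarith [u_quad, key]

lemma P_pos {x : ℝ} (hxg : gamma0 < x) : 0 < 3*x^4 + 6*x^2 - 1 := by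
  have hx2 : gamma0^2 < x^2 := by nlinarith [gamma0_pos]
  have key : 0 < (x^2 - gamma0^2) * (3*x^2 + 3*gamma0^2 + 6) := by
    apply mul_pos (by linarith) (by positivity)
  nlinarith [u_quad, key]

lemma g'_neg {x : ℝ} (hx : 0 < x) (hxg : x < gamma0) : g' x < 0 :=
  div_neg_of_neg_of_pos (P_neg hx hxg) (by positivity)

lemma g'_pos {x : ℝ} (hxg : gamma0 < x) : 0 < g' x := by
  have hx : 0 < x := gamma0_pos.trans hxg
  exact div_pos (P_pos hxg) (by positivity)

lemma g_pos {x : ℝ} (hx : 0 < x) : 0 < g x :=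
  div_pos (by positivity) (by positivity)

lemma gAnti : StrictAntiOn g (Ioc 0 gamma0) := by
  apply strictAntiOn_of_deriv_neg (convex_Ioc _ _)
    (fun x hx => (hasDerivAt_g hx.1).continuousAt.continuousWithinAt)
  rw [interior_Ioc]
  intro x hx
  rw [(hasDerivAt_g hx.1).deriv]
  exact g'_neg hx.1 hx.2

lemma gMono : StrictMonoOn g (Ici gamma0) := by
  apply strictMonoOn_of_deriv_pos (convex_Ici _)
    (fun x hx => (hasDerivAt_g (gamma0_pos.trans_le hx)).continuousAt.continuousWithinAt)
  rw [interior_Ici]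
  intro x hx
  rw [(hasDerivAt_g (gamma0_pos.trans hx)).deriv]
  exact g'_pos hx

lemma exists_b {a : ℝ} (ha : gamma0 ≤ a) : ∃ x, x ∈ Ioc 0 gamma0 ∧ g x = g a := by
  have hapos : 0 < a := gamma0_pos.trans_le ha
  have hM : 0 < g a := g_pos hapos
  set x₀ : ℝ := min gamma0 (1/(8*(g a)^2)) with hx₀def
  have hx₀pos : 0 < x₀ := lt_min gamma0_pos (by positivity)
  have hx₀le : x₀ ≤ gamma0 := min_le_left _ _
  have hx₀le1 : x₀ ≤ 1 := hx₀le.trans (by nlinarith [gamma0_ub])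
  have h2x : 2*x₀ ≤ (1/(2*g a))^2 := by
    have h := min_le_right gamma0 (1/(8*(g a)^2))
    have : (1/(2*g a))^2 = 1/(4*(g a)^2) := by field_simp; ring
    rw [this]
    calc 2*x₀ ≤ 2*(1/(8*(g a)^2)) := by linarith
    _ = 1/(4*(g a)^2) := by field_simp; ring
  have hsq : Real.sqrt (2*x₀) ≤ 1/(2*g a) := by
    rw [show (1/(2*g a)) = Real.sqrt ((1/(2*g a))^2) from (Real.sqrt_sq (by positivity)).symm]
    exact Real.sqrt_le_sqrt h2x
  have hcube0 : 0 ≤ x₀*(1-x₀)*(1+x₀) :=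
    mul_nonneg (mul_nonneg hx₀pos.le (by linarith)) (by linarith)
  have hqle : Real.sqrt (x₀+x₀^3) ≤ Real.sqrt (2*x₀) :=
    Real.sqrt_le_sqrt (by nlinarith [hcube0])
  have hd : 0 < Real.sqrt (x₀+x₀^3) := sq_pos hx₀pos
  have hchain : g a * (2*Real.sqrt (x₀+x₀^3)) ≤ 1 := by
    have h1 : g a * (2*Real.sqrt (x₀+x₀^3)) ≤ g a * (2*Real.sqrt (2*x₀)) := by nlinarith
    have h2 : g a * (2*Real.sqrt (2*x₀)) ≤ g a * (2*(1/(2*g a))) := by nlinarith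
    have h3 : g a * (2*(1/(2*g a))) = 1 := by field_simp
    linarith
  have h1 : g a ≤ g x₀ := by
    have hgx0 : g x₀ = (1+3*x₀^2)/(2*Real.sqrt (x₀+x₀^3)) := rfl
    rw [hgx0, le_div_iff₀ (by positivity)]
    nlinarith [sq_nonneg x₀]
  have h0 : g gamma0 ≤ g a := gMono.monotoneOn (self_mem_Ici) ha ha
  have hcont : ContinuousOn g (Icc x₀ gamma0) := fun x hx =>
    (hasDerivAt_g (hx₀pos.trans_le hx.1)).continuousAt.continuousWithinAt
  obtain ⟨x, hx, hgx⟩ := intermediate_value_Icc' hx₀le hcont ⟨h0, h1⟩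
  exact ⟨x, ⟨hx₀pos.trans_le hx.1, hx.2⟩, hgx⟩

def bfun : ℝ → ℝ := fun a => if h : gamma0 ≤ a then (exists_b h).choose else gamma0

lemma bfun_mem {a : ℝ} (ha : gamma0 ≤ a) : bfun a ∈ Ioc 0 gamma0 := by
  rw [bfun, dif_pos ha]; exact (exists_b ha).choose_spec.1

lemma bfun_eq {a : ℝ} (ha : gamma0 ≤ a) : g (bfun a) = g a := by
  rw [bfun, dif_pos ha]; exact (exists_b ha).choose_spec.2

lemma bfun_pos {a : ℝ} (ha : gamma0 ≤ a) : 0 < bfun a := (bfun_mem ha).1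

lemma bfun_unique {a x : ℝ} (ha : gamma0 ≤ a) (hx : x ∈ Ioc 0 gamma0) (hgx : g x = g a) :
    x = bfun a := gAnti.injOn hx (bfun_mem ha) (hgx.trans (bfun_eq ha).symm)

lemma bfun_gamma0 : bfun gamma0 = gamma0 :=
  (bfun_unique le_rfl ⟨gamma0_pos, le_rfl⟩ rfl).symm

lemma bfun_lt {a : ℝ} (ha : gamma0 < a) : bfun a < gamma0 := by
  rcases (bfun_mem ha.le).2.lt_or_eq with h | h
  · exact h
  · exfalso
    have := bfun_eq ha.le
    rw [h] at this
    exact absurd this (ne_of_lt (gMono self_mem_Ici (mem_Ici.mpr ha.le) ha))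

def GG (x y : ℝ) : ℝ := (x+y)^2*(9*x*y-1) - (1-x*y)*(1-3*x*y)^2

lemma GG_rel {a : ℝ} (ha : gamma0 < a) : GG a (bfun a) = 0 := by
  set b := bfun a with hbdef
  have hb0 : 0 < b := bfun_pos ha.le
  have hba : b < a := (bfun_lt ha).trans ha
  have ha0 : 0 < a := gamma0_pos.trans ha
  have heq : g b = g a := bfun_eq ha.le
  rw [g, g, div_eq_div_iff (by positivity) (by positivity)] at heq
  have hsqr : ((1+3*b^2) * (2*Real.sqrt (a+a^3)))^2 = ((1+3*a^2) * (2*Real.sqrt (b+b^3)))^2 := by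
    rw [heq]
  have hqa := sq_sq ha0
  have hqb := sq_sq hb0
  have hF : (1+3*a^2)^2*(b+b^3) - (1+3*b^2)^2*(a+a^3) = 0 := by
    have := hsqr
    rw [mul_pow, mul_pow, mul_pow, mul_pow, hqa, hqb] at this
    nlinarith [this]
  have hfact : (a - b) * GG a b = (1+3*a^2)^2*(b+b^3) - (1+3*b^2)^2*(a+a^3) := by
    rw [GG]; ring
  have := hfact.trans hF
  exact (mul_eq_zero.1 this).resolve_left (sub_ne_zero.2 hba.ne')

lemma master {a b : ℝ} (hb0 : 0 < b) (hba : b < a) (hGG : GG a b = 0) :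
    1 < 9*(a*b) ∧ a*b ≤ gamma0^2 ∧ 2*gamma0 ≤ a + b := by
  have ha0 : 0 < a := hb0.trans hba
  have hab : 0 < a*b := mul_pos ha0 hb0
  have h9 : 1 < 9*(a*b) := by
    by_contra hc
    push_neg at hc
    have h3 : 1 - 3*(a*b) ≥ 2/3 := by linarith
    have h7 : 1 - (a*b) ≥ 8/9 := by linarith
    have h4 : (a+b)^2*(1-9*(a*b)) ≥ 0 := mul_nonneg (sq_nonneg _) (by linarith)
    have hGG' : (a+b)^2*(9*(a*b)-1) = (1-(a*b))*(1-3*(a*b))^2 := by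
      rw [GG] at hGG; linarith
    nlinarith [h3, h7]
  have hple : a*b ≤ gamma0^2 := by
    have hid : (a-b)^2*(9*(a*b)-1) =
        (gamma0^2 - a*b)*(9*(a*b)^2+(9*gamma0^2+21)*(a*b)+(3*gamma0^2+6)) := by
      rw [GG] at hGG
      linear_combination hGG + (-3*(a*b)-1)*u_quad
    have hQ2 : 0 < 9*(a*b)^2+(9*gamma0^2+21)*(a*b)+(3*gamma0^2+6) := by positivity
    have h4 : 0 ≤ (a-b)^2*(9*(a*b)-1) := mul_nonneg (sq_nonneg _) (by linarith)
    by_contra hc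
    push_neg at hc
    have : (gamma0^2 - a*b)*(9*(a*b)^2+(9*gamma0^2+21)*(a*b)+(3*gamma0^2+6)) < 0 :=
      mul_neg_of_neg_of_pos (by linarith) hQ2
    linarith
  refine ⟨h9, hple, ?_⟩
  have hid2 : ((a+b)^2-4*gamma0^2)*(9*(a*b)-1) =
      (gamma0^2-(a*b))*(9*(a*b)^2-(15-9*gamma0^2)*(a*b)+(3*gamma0^2+10)) := by
    rw [GG] at hGG
    linear_combination hGG + (-3*(a*b)-1)*u_quad
  have hQ1 : 0 ≤ 9*(a*b)^2-(15-9*gamma0^2)*(a*b)+(3*gamma0^2+10) := by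
    nlinarith [sq_nonneg (6*(a*b)-5+3*gamma0^2), u_quad, sq_nonneg gamma0, gamma0_pos]
  have hprod : 0 ≤ (gamma0^2-(a*b))*(9*(a*b)^2-(15-9*gamma0^2)*(a*b)+(3*gamma0^2+10)) :=
    mul_nonneg (by linarith) hQ1
  have hs2 : 4*gamma0^2 ≤ (a+b)^2 := by nlinarith [hid2]
  nlinarith [hs2, gamma0_pos, ha0, hb0]

def KK (x y : ℝ) : ℝ := 9*(x+y)^2 + (1-3*x*y)*(7-9*x*y)
def GGx (x y : ℝ) : ℝ := 2*(x+y)*(9*x*y-1) + y * KK x y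
def GGy (x y : ℝ) : ℝ := 2*(x+y)*(9*x*y-1) + x * KK x y

lemma key_local {a : ℝ} (ha : gamma0 < a) :
    ContDiffAt ℝ (⊤ : ℕ∞) bfun a ∧ HasDerivAt bfun ((g' (bfun a))⁻¹ * g' a) a := by
  have ha0 : 0 < a := gamma0_pos.trans ha
  set b₀ := bfun a with hb₀def
  have hb0 : 0 < b₀ := bfun_pos ha.le
  have hblt : b₀ < gamma0 := bfun_lt ha
  have hne : g' b₀ ≠ 0 := (g'_neg hb0 hblt).ne
  have hcd : ContDiffAt ℝ (⊤ : ℕ∞) g b₀ := contDiffAt_g hb0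
  have hsd : HasStrictDerivAt g (g' b₀) b₀ := by
    have h := hcd.hasStrictDerivAt (by simp)
    rwa [(hasDerivAt_g hb0).deriv] at h
  set φ := hsd.localInverse g (g' b₀) b₀ hne with hφdef
  have hinv_ev : ∀ᶠ y in nhds (g b₀), g (φ y) = y :=
    (hsd.hasStrictFDerivAt_equiv hne).eventually_right_inverse
  have htend : Filter.Tendsto φ (nhds (g b₀)) (nhds b₀) :=
    (hsd.hasStrictFDerivAt_equiv hne).localInverse_tendsto
  have hfd : HasFDerivAt g
      (ContinuousLinearEquiv.unitsEquivAut ℝ (Units.mk0 (g' b₀) hne) : ℝ →L[ℝ] ℝ) b₀ :=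
    (hsd.hasStrictFDerivAt_equiv hne).hasFDerivAt
  have hφcd : ContDiffAt ℝ (⊤ : ℕ∞) φ (g b₀) := hcd.to_localInverse hfd (by simp)
  have hga : g b₀ = g a := bfun_eq ha.le
  have h2 : Filter.Tendsto g (nhds a) (nhds (g b₀)) := by
    rw [hga]; exact (hasDerivAt_g ha0).continuousAt
  have h3 : ∀ᶠ x in nhds a, g (φ (g x)) = g x := h2.eventually hinv_ev
  have h4 : ∀ᶠ x in nhds a, φ (g x) ∈ Ioo 0 gamma0 :=
    h2.eventually (htend.eventually_mem (isOpen_Ioo.mem_nhds ⟨hb0, hblt⟩))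
  have hev : bfun =ᶠ[nhds a] (fun x => φ (g x)) := by
    filter_upwards [eventually_gt_nhds ha, h3, h4] with x hx1 hx3 hx4
    exact (bfun_unique hx1.le ⟨hx4.1, hx4.2.le⟩ hx3).symm
  have hsda : HasStrictDerivAt g (g' a) a := by
    have h := (contDiffAt_g ha0).hasStrictDerivAt (by simp)
    rwa [(hasDerivAt_g ha0).deriv] at h
  have hφd : HasStrictDerivAt φ (g' b₀)⁻¹ (g a) := hga ▸ hsd.to_localInverse hne
  have hcomp : HasStrictDerivAt (fun x => φ (g x)) ((g' b₀)⁻¹ * g' a) a := hφd.comp a hsda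
  constructor
  · have hcg : ContDiffAt ℝ (⊤ : ℕ∞) (fun x => φ (g x)) a := by
      have hφ' : ContDiffAt ℝ (⊤ : ℕ∞) φ (g a) := hga ▸ hφcd
      exact hφ'.comp a (contDiffAt_g ha0)
    exact hcg.congr_of_eventuallyEq hev
  · exact hcomp.hasDerivAt.congr_of_eventuallyEq hev

lemma bfun_hasDerivAt {a : ℝ} (ha : gamma0 < a) : HasDerivAt bfun (deriv bfun a) a := by
  have h := (key_local ha).2
  rw [h.deriv]; exact h

lemma deriv_rel {a : ℝ} (ha : gamma0 < a) :
    deriv bfun a * GGy a (bfun a) = -(GGx a (bfun a)) := by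
  set r := deriv bfun a with hrdef
  set b := bfun a with hbdef
  have hb : HasDerivAt bfun r a := bfun_hasDerivAt ha
  have hsum : HasDerivAt (fun x => x + bfun x) (1 + r) a := (hasDerivAt_id a).add hb
  have hprod : HasDerivAt (fun x => x * bfun x) (1 * bfun a + a * r) a :=
    (hasDerivAt_id a).mul hb
  have hA : HasDerivAt (fun x => (x + bfun x)^2)
      ((2:ℕ) * (a + bfun a)^(2-1) * (1 + r)) a := hsum.pow 2
  have hB : HasDerivAt (fun x => 9*(x*bfun x) - 1) (9*(1 * bfun a + a * r)) a :=
    (hprod.const_mul 9).sub_const 1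
  have hC : HasDerivAt (fun x => 1 - x*bfun x) (-(1 * bfun a + a * r)) a := hprod.const_sub 1
  have hD : HasDerivAt (fun x => (1 - 3*(x*bfun x))^2)
      ((2:ℕ) * (1 - 3*(a*bfun a))^(2-1) * (-(3*(1 * bfun a + a * r)))) a :=
    ((hprod.const_mul 3).const_sub 1).pow 2
  have htot := (hA.mul hB).sub (hC.mul hD)
  have hzero : HasDerivAt (fun x => (x + bfun x)^2 * (9*(x*bfun x) - 1) -
      (1 - x*bfun x) * (1 - 3*(x*bfun x))^2) 0 a := by
    refine (hasDerivAt_const a 0).congr_of_eventuallyEq ?_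
    filter_upwards [eventually_gt_nhds ha] with x hx
    have h := GG_rel hx
    rw [GG] at h
    linear_combination h
  have h0 := htot.unique hzero
  rw [GGx, GGy, KK]
  push_cast at h0
  linear_combination h0
lemma u16 : gamma0^2 ≤ 1/6 := by nlinarith [u_quad, sq_nonneg gamma0]

set_option maxHeartbeats 1000000 in
lemma final_bounds {a : ℝ} (ha : gamma0 < a) :
    (-1 ≤ deriv bfun a ∧ deriv bfun a ≤ -(bfun a / a)) ∧
    0 < deriv bfun a + 1 ∧
    ((200:ℝ)⁻¹ / a ≤ bfun a ∧ bfun a ≤ 200 / a) ∧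
    ((200:ℝ)⁻¹ / a^2 ≤ -deriv bfun a ∧ -deriv bfun a ≤ 200 / a^2) ∧
    ((200:ℝ)⁻¹ * (a - gamma0) / a ≤ deriv bfun a + 1 ∧
      deriv bfun a + 1 ≤ 200 * (a - gamma0) / a) := by
  have ha0 : 0 < a := gamma0_pos.trans ha
  set b := bfun a with hbdef
  set r := deriv bfun a with hrdef
  have hb0 : 0 < b := bfun_pos ha.le
  have hblt : b < gamma0 := bfun_lt ha
  have hba : b < a := hblt.trans ha
  have hGG : GG a b = 0 := GG_rel ha
  obtain ⟨h9, hple, hsge⟩ := master hb0 hba hGG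
  have hrel : r * GGy a b = -(GGx a b) := deriv_rel ha
  have hp16 : a*b ≤ 1/6 := hple.trans u16
  have hglb : (0.393:ℝ) < gamma0 := gamma0_lb
  have hgub : gamma0 < 0.3934 := gamma0_ub
  set K := KK a b with hKdef
  set Dx := GGx a b with hDxdef
  set Dy := GGy a b with hDydef
  have hKlo : 9*(a+b)^2 ≤ K := by
    rw [hKdef, KK]
    nlinarith only [hp16, mul_pos ha0 hb0]
  have hKhi : K ≤ 9*(a+b)^2 + 7 := by
    rw [hKdef, KK]
    nlinarith only [h9, hp16]
  have hK9a : 9*a^2 ≤ K := by nlinarith only [hKlo, hb0, ha0]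
  have hK82 : K ≤ 82*a^2 := by nlinarith only [hKhi, hb0, hba, hgub, hglb, ha, ha0]
  have hK_pos : 0 < K := by nlinarith only [hK9a, ha0]
  have hKa_pos : 0 < a * K := mul_pos ha0 hK_pos
  have htail0 : 0 ≤ 2*(a+b)*(9*a*b-1) := by
    nlinarith only [h9, ha0, hb0]
  have hGG' : (a+b)^2*(9*a*b-1) = (1-a*b)*(1-3*a*b)^2 := by
    rw [GG] at hGG; linarith only [hGG]
  have hs1 : (a+b)^2*(9*a*b-1) ≤ 1 := by
    have e2 : (1-3*(a*b))^2 ≤ 1 := by nlinarith only [h9, hp16]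
    have e1 : 0 ≤ 1 - a*b := by nlinarith only [hp16]
    nlinarith only [hGG', e1, e2]
  have htail_hi : 2*(a+b)*(9*a*b-1) ≤ 7*a := by
    nlinarith only [hs1, hsge, ha, hglb, h9, hb0, ha0]
  have hDyeq : Dy = 2*(a+b)*(9*a*b-1) + a*K := by rw [hDydef, GGy, hKdef]
  have hDxeq : Dx = 2*(a+b)*(9*a*b-1) + b*K := by rw [hDxdef, GGx, hKdef]
  have hDy_pos : 0 < Dy := by
    rw [hDyeq]
    linarith only [htail0, hKa_pos]
  have hDy_lo : 9*a^3 ≤ Dy := by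
    rw [hDyeq]
    nlinarith only [hK9a, ha0, htail0]
  have hDy_hi : Dy ≤ 130*a^3 := by
    rw [hDyeq]
    nlinarith only [hK82, htail_hi, ha0, hglb, ha]
  have hDx_lo : a ≤ Dx := by
    rw [hDxeq]
    nlinarith only [h9, hK9a, hb0, ha0, htail0, mul_le_mul_of_nonneg_left hK9a hb0.le]
  have hDx_hi : Dx ≤ 20*a := by
    rw [hDxeq]
    have h1 : b*K ≤ b*(82*a^2) := mul_le_mul_of_nonneg_left hK82 hb0.le
    have h2 : gamma0^2 ≤ 0.1548 := by nlinarith only [hgub, gamma0_nonneg]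
    nlinarith only [htail_hi, h1, hple, h2, ha0, hb0]
  have hgap1 : a - gamma0 ≤ a - b := by linarith only [hblt]
  have hgap2 : a - b ≤ 2*(a - gamma0) := by linarith only [hsge]
  have hplus : (r + 1) * Dy = (a - b) * K := by
    have hid : Dy - Dx = (a-b)*K := by rw [hDydef, hDxdef, hKdef, GGy, GGx]; ring
    linear_combination hrel + hid
  have hr1_pos : 0 < r + 1 := by
    have h1 : 0 < (a-b)*K := mul_pos (by linarith only [hba]) hK_pos
    have h2 : 0 * Dy < (r+1) * Dy := by rw [zero_mul, hplus]; exact h1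
    exact lt_of_mul_lt_mul_right h2 hDy_pos.le
  refine ⟨⟨by linarith only [hr1_pos], ?_⟩, hr1_pos, ⟨?_, ?_⟩, ⟨?_, ?_⟩, ?_, ?_⟩
  · -- r ≤ -(b/a)
    have hid2 : a*Dx - b*Dy = (a-b)*(2*(a+b)*(9*a*b-1)) := by
      rw [hDydef, hDxdef, GGy, GGx, KK]; ring
    rw [show -(b/a) = (-b)/a by ring, le_div_iff₀ ha0]
    have h1 : 0 ≤ (a-b)*(2*(a+b)*(9*a*b-1)) :=
      mul_nonneg (by linarith only [hba]) htail0
    have h5 : r * a * Dy = -(a * Dx) := by linear_combination a * hrel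
    have hfin : r * a * Dy ≤ (-b) * Dy := by linarith only [h5, hid2, h1]
    exact le_of_mul_le_mul_right hfin hDy_pos
  · rw [div_le_iff₀ ha0]
    nlinarith only [h9]
  · rw [le_div_iff₀ ha0]
    nlinarith only [hp16]
  · rw [div_le_iff₀ (by positivity : (0:ℝ) < a^2)]
    have key : (-r*a^2)*Dy = a^2*Dx := by linear_combination (-(a^2)) * hrel
    have h2 : a^3 ≤ a^2*Dx := by
      nlinarith only [mul_le_mul_of_nonneg_left hDx_lo (sq_nonneg a)]
    have hfin : (200:ℝ)⁻¹ * Dy ≤ (-r*a^2) * Dy := by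
      linarith only [key, h2, hDy_hi, pow_nonneg ha0.le 3]
    exact le_of_mul_le_mul_right hfin hDy_pos
  · rw [le_div_iff₀ (by positivity : (0:ℝ) < a^2)]
    have key : (-r*a^2)*Dy = a^2*Dx := by linear_combination (-(a^2)) * hrel
    have h3 : a^2*Dx ≤ 20*a^3 := by
      nlinarith only [mul_le_mul_of_nonneg_left hDx_hi (sq_nonneg a)]
    have hfin : (-r*a^2) * Dy ≤ 200 * Dy := by
      linarith only [key, h3, hDy_lo, pow_nonneg ha0.le 3]
    exact le_of_mul_le_mul_right hfin hDy_pos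
  · rw [div_le_iff₀ ha0]
    have key7 : ((r+1)*a)*Dy = a*((a-b)*K) := by linear_combination a * hplus
    have e1 : (a-gamma0) * (9*a^2) ≤ (a-b)*K :=
      mul_le_mul hgap1 hK9a (by positivity) (by linarith only [hba])
    have h4 : 9*a^3*(a-gamma0) ≤ a*((a-b)*K) := by
      nlinarith only [mul_le_mul_of_nonneg_left e1 ha0.le]
    have h5 : (a-gamma0)*Dy ≤ (a-gamma0)*(130*a^3) :=
      mul_le_mul_of_nonneg_left hDy_hi (by linarith only [ha])
    have hX : 0 ≤ (a-gamma0)*a^3 := mul_nonneg (by linarith only [ha]) (by positivity)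
    have hfin : ((200:ℝ)⁻¹*(a-gamma0)) * Dy ≤ ((r+1)*a) * Dy := by
      linarith only [key7, h4, h5, hX]
    exact le_of_mul_le_mul_right hfin hDy_pos
  · rw [le_div_iff₀ ha0]
    have key7 : ((r+1)*a)*Dy = a*((a-b)*K) := by linear_combination a * hplus
    have e2 : (a-b)*K ≤ (2*(a-gamma0))*(82*a^2) :=
      mul_le_mul hgap2 hK82 hK_pos.le (by linarith only [ha])
    have h6 : a*((a-b)*K) ≤ 164*a^3*(a-gamma0) := by
      nlinarith only [mul_le_mul_of_nonneg_left e2 ha0.le]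
    have h7 : (a-gamma0)*(9*a^3) ≤ (a-gamma0)*Dy :=
      mul_le_mul_of_nonneg_left hDy_lo (by linarith only [ha])
    have hX : 0 ≤ (a-gamma0)*a^3 := mul_nonneg (by linarith only [ha]) (by positivity)
    have hfin : ((r+1)*a) * Dy ≤ (200*(a-gamma0)) * Dy := by
      linarith only [key7, h6, h7, hX]
    exact le_of_mul_le_mul_right hfin hDy_pos

lemma bfun_anti : StrictAntiOn bfun (Ioi gamma0) := by
  intro x hx y hy hxy
  rw [mem_Ioi] at hx hy
  by_contra h
  push_neg at h
  have h1 : g x < g y := gMono (mem_Ici.2 hx.le) (mem_Ici.2 hy.le) hxy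
  rcases h.lt_or_eq with h' | h'
  · have h2 := gAnti (bfun_mem hx.le) (bfun_mem hy.le) h'
    rw [bfun_eq hx.le, bfun_eq hy.le] at h2
    linarith
  · have h2 : g x = g y := by rw [← bfun_eq hx.le, ← bfun_eq hy.le, h']
    linarith

lemma bfun_lower {a : ℝ} (ha : gamma0 ≤ a) : 2*gamma0 - a ≤ bfun a := by
  rcases eq_or_lt_of_le ha with h | h
  · rw [← h, bfun_gamma0]; linarith
  · have := (master (bfun_pos ha) ((bfun_lt h).trans h) (GG_rel h)).2.2
    linarith

lemma bfun_contOn : ContinuousOn bfun (Ici gamma0) := by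
  intro x hx
  rcases eq_or_lt_of_le (mem_Ici.1 hx) with h | h
  · have hl : Filter.Tendsto (fun a : ℝ => 2*gamma0 - a) (nhdsWithin gamma0 (Ici gamma0))
        (nhds gamma0) := by
      have h1 : Continuous (fun a : ℝ => 2*gamma0 - a) := by fun_prop
      have h2 := (h1.tendsto gamma0).mono_left (nhdsWithin_le_nhds (s := Ici gamma0))
      rw [show 2*gamma0 - gamma0 = gamma0 by ring] at h2
      exact h2
    have hsq : Filter.Tendsto bfun (nhdsWithin gamma0 (Ici gamma0)) (nhds gamma0) := by
      apply tendsto_of_tendsto_of_tendsto_of_le_of_le' hl tendsto_const_nhds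
      · exact eventually_mem_nhdsWithin.mono (fun a ha' => bfun_lower ha')
      · exact eventually_mem_nhdsWithin.mono (fun a ha' => (bfun_mem ha').2)
    have : ContinuousWithinAt bfun (Ici gamma0) gamma0 := by
      rw [ContinuousWithinAt, bfun_gamma0]
      exact hsq
    rw [← h]
    exact this
  · exact ((key_local h).1.continuousAt).continuousWithinAt

lemma bfun_smooth : ContDiffOn ℝ (⊤:ℕ∞) bfun (Ioi gamma0) :=
  fun x hx => ((key_local hx).1.of_le (mod_cast le_top)).contDiffWithinAt

lemma sum_mono : StrictMonoOn (fun a => a + bfun a) (Ici gamma0) := by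
  apply strictMonoOn_of_deriv_pos (convex_Ici _)
  · exact continuousOn_id.add bfun_contOn
  · rw [interior_Ici]
    intro x hx
    have hd : HasDerivAt (fun a => a + bfun a) (1 + deriv bfun x) x :=
      (hasDerivAt_id x).add (bfun_hasDerivAt hx)
    rw [hd.deriv]
    have := (final_bounds hx).2.1
    linarith

end S5

/-- There is a unique function b : [γ₀, ∞) → (0, γ₀] with λ'(b(a)) = λ'(a) for a ≥ γ₀;
it is continuous on [γ₀, ∞), smooth and strictly decreasing on (γ₀, ∞), satisfies
−1 ≤ b'(a) ≤ −b(a)/a for a > γ₀, a ↦ a + b(a) is increasing on [γ₀, ∞), and there is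
C ≥ 1 such that for a > γ₀: C⁻¹/a ≤ b(a) ≤ C/a, C⁻¹/a² ≤ −b'(a) ≤ C/a², and
C⁻¹(a − γ₀)/a ≤ b'(a) + 1 ≤ C(a − γ₀)/a. -/
theorem stmt5 :
    ∃ b : ℝ → ℝ,
      (∀ a : ℝ, gamma0 ≤ a → b a ∈ Ioc 0 gamma0 ∧ deriv lam (b a) = deriv lam a) ∧
      (∀ b' : ℝ → ℝ,
        (∀ a : ℝ, gamma0 ≤ a → b' a ∈ Ioc 0 gamma0 ∧ deriv lam (b' a) = deriv lam a) →
        ∀ a : ℝ, gamma0 ≤ a → b' a = b a) ∧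
      b gamma0 = gamma0 ∧
      ContinuousOn b (Ici gamma0) ∧
      ContDiffOn ℝ (⊤ : ℕ∞) b (Ioi gamma0) ∧
      StrictAntiOn b (Ioi gamma0) ∧
      (∀ a : ℝ, gamma0 < a → -1 ≤ deriv b a ∧ deriv b a ≤ -(b a / a)) ∧
      StrictMonoOn (fun a => a + b a) (Ici gamma0) ∧
      ∃ C : ℝ, 1 ≤ C ∧ ∀ a : ℝ, gamma0 < a →
        (C⁻¹ / a ≤ b a ∧ b a ≤ C / a) ∧
        (C⁻¹ / a ^ 2 ≤ -deriv b a ∧ -deriv b a ≤ C / a ^ 2) ∧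
        (C⁻¹ * (a - gamma0) / a ≤ deriv b a + 1 ∧ deriv b a + 1 ≤ C * (a - gamma0) / a) := by
  refine ⟨S5.bfun, ?_, ?_, S5.bfun_gamma0, S5.bfun_contOn, S5.bfun_smooth, S5.bfun_anti,
    fun a ha => (S5.final_bounds ha).1, S5.sum_mono, 200, by norm_num, fun a ha => ?_⟩
  · intro a ha
    refine ⟨S5.bfun_mem ha, ?_⟩
    rw [S5.deriv_lam (S5.bfun_pos ha), S5.deriv_lam (S5.gamma0_pos.trans_le ha)]
    exact S5.bfun_eq ha
  · intro b' hb' a ha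
    obtain ⟨hmem, heq⟩ := hb' a ha
    apply S5.bfun_unique ha hmem
    rw [← S5.deriv_lam hmem.1, ← S5.deriv_lam (S5.gamma0_pos.trans_le ha)]
    exact heq
  · obtain ⟨-, -, h1, h2, h3, h4⟩ := S5.final_bounds ha
    exact ⟨h1, h2, h3, h4⟩

end
end

section
/- Suppose U ≥ 1, ξ, η ∈ ℝ², max(|ξ|, |η|, |ξ − η|) ≤ U, and a := min(|ξ|, |η|, |ξ − η|) satisfies a ≤ 2⁻¹⁰ U⁻¹. Then for every choice of signs σ, μ, ν ∈ {+1, −1}: |σΛ(ξ) − μΛ(ξ − η) − νΛ(η)| ≥ √(a + a³)/4. -/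
/-!
`Lam ξ` = √(|ξ| + |ξ|³) for ξ ∈ ℝ²; Λ_κ = κΛ for κ ∈ {+1, −1}; the phase functions are
Φ_{σμν}(ξ, η) = σΛ(ξ) − μΛ(ξ − η) − νΛ(η).
-/

noncomputable section

open Real

/-- The dispersion relation Λ(ξ) = √(|ξ| + |ξ|³) on ℝ². -/
def Lam (ξ : EuclideanSpace ℝ (Fin 2)) : ℝ := Real.sqrt (‖ξ‖ + ‖ξ‖ ^ 3)

/-! Writing `a ≤ b, c` for the three lengths `|ξ|, |η|, |ξ - η|`, the triangle inequality gives
`|b - c| ≤ a`, so `|Λ(b) - Λ(c)|² ≤ |Λ(b)² - Λ(c)²| ≤ a (1 + 3 b²)`. For `b ≤ 2/5` this is at most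
`(3/2) Λ(a)²`, and `Λ(b) + Λ(c) ≥ 2 Λ(a)`; for `b > 2/5` it is at most `10 a b²` while
`Λ(b) ≥ b^{3/2}`, and the smallness `a b ≤ 2⁻¹⁰` takes over. Either way `|Λ(b) - Λ(c)| ≤ (3/4) Λ(a)`,
which leaves at least `Λ(a)/4` in every signed sum `±Λ(a) ± Λ(b) ± Λ(c)`. -/

def lamRadial (r : ℝ) : ℝ := √(r + r ^ 3)

lemma Lam_eq_lamRadial (ξ : EuclideanSpace ℝ (Fin 2)) : Lam ξ = lamRadial ‖ξ‖ := rfl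

namespace lamRadial

variable {a b c r : ℝ}

lemma nonneg (r : ℝ) : 0 ≤ lamRadial r := Real.sqrt_nonneg _

lemma sq (hr : 0 ≤ r) : lamRadial r ^ 2 = r + r ^ 3 := Real.sq_sqrt (by positivity)

lemma mono (hr : 0 ≤ r) (hrs : r ≤ b) : lamRadial r ≤ lamRadial b :=
  Real.sqrt_le_sqrt (by gcongr)

lemma sqrt_le (hr : 0 ≤ r) : √r ≤ lamRadial r :=
  Real.sqrt_le_sqrt (by nlinarith [pow_nonneg hr 3])

lemma mul_sqrt_le (hr : 0 ≤ r) : r * √r ≤ lamRadial r := by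
  rw [← Real.sqrt_sq hr, ← Real.sqrt_mul (sq_nonneg r), Real.sqrt_sq hr]
  exact Real.sqrt_le_sqrt (by nlinarith)

lemma sq_sub_sq_le (hc : 0 ≤ c) (hcb : c ≤ b) (hba : b - c ≤ a) :
    lamRadial b ^ 2 - lamRadial c ^ 2 ≤ a * (1 + 3 * b ^ 2) := by
  rw [sq hc, sq (hc.trans hcb)]
  have hquad : b ^ 2 + b * c + c ^ 2 ≤ 3 * b ^ 2 := by nlinarith
  calc b + b ^ 3 - (c + c ^ 3) = (b - c) * (1 + (b ^ 2 + b * c + c ^ 2)) := by ring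
    _ ≤ a * (1 + 3 * b ^ 2) := by gcongr <;> nlinarith

lemma sub_le_of_le_two_fifths (ha : 0 ≤ a) (hac : a ≤ c) (hcb : c ≤ b) (hba : b - c ≤ a)
    (hb : b ≤ 2 / 5) : lamRadial b - lamRadial c ≤ 3 / 4 * lamRadial a := by
  have hc := ha.trans hac
  have hdiff := sq_sub_sq_le hc hcb hba
  have hsmall : a * (1 + 3 * b ^ 2) ≤ 3 / 2 * lamRadial a ^ 2 := by
    have hb2 : b ^ 2 ≤ 4 / 25 := by nlinarith
    rw [sq ha]; nlinarith [mul_le_mul_of_nonneg_left hb2 ha, pow_nonneg ha 3]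
  nlinarith [mono ha hac, mono hc hcb, nonneg a]

lemma sub_le_of_two_fifths_lt (ha : 0 ≤ a) (hac : a ≤ c) (hcb : c ≤ b) (hba : b - c ≤ a)
    (hab : a * b ≤ 2 ^ (-10 : ℤ)) (hb : 2 / 5 < b) :
    lamRadial b - lamRadial c ≤ 3 / 4 * lamRadial a := by
  have hc := ha.trans hac
  have hb0 : 0 < b := by linarith
  have hsb : 0 < √b := Real.sqrt_pos.mpr hb0
  have hsab : √a * √b ≤ 1 / 32 := by
    calc √a * √b = √(a * b) := (Real.sqrt_mul ha b).symm
      _ ≤ √(2 ^ (-10 : ℤ)) := Real.sqrt_le_sqrt hab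
      _ = 1 / 32 := by
        rw [show (2 : ℝ) ^ (-10 : ℤ) = (1 / 32) ^ 2 by norm_num, Real.sqrt_sq (by norm_num)]
  have hdiff : (lamRadial b - lamRadial c) * (b * √b) ≤ 10 * (√a ^ 2 * √b) * (b * √b) := by
    calc (lamRadial b - lamRadial c) * (b * √b)
        ≤ lamRadial b ^ 2 - lamRadial c ^ 2 := by
          nlinarith [mul_sqrt_le hb0.le, mono hc hcb, nonneg c]
      _ ≤ a * (1 + 3 * b ^ 2) := sq_sub_sq_le hc hcb hba
      _ ≤ 10 * a * b ^ 2 := by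
          have hb2 : 1 ≤ 7 * b ^ 2 := by nlinarith
          nlinarith [mul_le_mul_of_nonneg_left hb2 ha]
      _ = 10 * (√a ^ 2 * √b) * (b * √b) := by
          rw [Real.sq_sqrt ha]; linear_combination (-10 * a * b) * Real.sq_sqrt hb0.le
  have hcancel := le_of_mul_le_mul_right hdiff (by positivity)
  nlinarith [sqrt_le ha, Real.sqrt_nonneg a]

lemma sub_le (ha : 0 ≤ a) (hac : a ≤ c) (hcb : c ≤ b) (hba : b - c ≤ a)
    (hab : a * b ≤ 2 ^ (-10 : ℤ)) : lamRadial b - lamRadial c ≤ 3 / 4 * lamRadial a :=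
  (le_or_gt b (2 / 5)).elim (sub_le_of_le_two_fifths ha hac hcb hba)
    (sub_le_of_two_fifths_lt ha hac hcb hba hab)

lemma abs_sub_le (ha : 0 ≤ a) (hab : a ≤ b) (hac : a ≤ c) (hbc : |b - c| ≤ a)
    (hb : a * b ≤ 2 ^ (-10 : ℤ)) (hc : a * c ≤ 2 ^ (-10 : ℤ)) :
    |lamRadial b - lamRadial c| ≤ 3 / 4 * lamRadial a := by
  rw [abs_le] at hbc ⊢
  rcases le_total c b with hcb | hbc'
  · have := mono (ha.trans hac) hcb
    exact ⟨by linarith [nonneg a], sub_le ha hac hcb (by linarith) hb⟩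
  · have := mono (ha.trans hab) hbc'
    exact ⟨by linarith [sub_le ha hab hbc' (by linarith) hc], by linarith [nonneg a]⟩

end lamRadial

lemma sub_abs_sub_le_abs_signed_sum {x y z s t u : ℝ} (hx : 0 ≤ x) (hxy : x ≤ y)
    (hs : s = 1 ∨ s = -1) (ht : t = 1 ∨ t = -1) (hu : u = 1 ∨ u = -1) :
    x - |y - z| ≤ |s * x + t * y + u * z| := by
  have h₁ := le_abs_self (s * x + t * y + u * z)
  have h₂ := neg_abs_le (s * x + t * y + u * z)
  have h₃ := le_abs_self (y - z)
  have h₄ := neg_abs_le (y - z)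
  rcases hs with rfl | rfl <;> rcases ht with rfl | rfl <;> rcases hu with rfl | rfl <;> linarith

lemma lamRadial_div_four_le_abs_signed_sum {a b c s t u : ℝ} (ha : 0 ≤ a) (hab : a ≤ b)
    (hac : a ≤ c) (hbc : |b - c| ≤ a) (hb : a * b ≤ 2 ^ (-10 : ℤ)) (hc : a * c ≤ 2 ^ (-10 : ℤ))
    (hs : s = 1 ∨ s = -1) (ht : t = 1 ∨ t = -1) (hu : u = 1 ∨ u = -1) :
    lamRadial a / 4 ≤ |s * lamRadial a + t * lamRadial b + u * lamRadial c| :=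
  calc lamRadial a / 4 ≤ lamRadial a - |lamRadial b - lamRadial c| := by
        linarith [lamRadial.abs_sub_le ha hab hac hbc hb hc]
    _ ≤ _ := sub_abs_sub_le_abs_signed_sum (lamRadial.nonneg a) (lamRadial.mono ha hab) hs ht hu

lemma lamRadial_min_div_four_le_abs_signed_sum {x y z s t u : ℝ}
    (hx : 0 ≤ x) (hy : 0 ≤ y) (hz : 0 ≤ z)
    (hxy : |x - y| ≤ z) (hyz : |y - z| ≤ x) (hxz : |x - z| ≤ y)
    (hmx : min (min x y) z * x ≤ 2 ^ (-10 : ℤ)) (hmy : min (min x y) z * y ≤ 2 ^ (-10 : ℤ))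
    (hmz : min (min x y) z * z ≤ 2 ^ (-10 : ℤ))
    (hs : s = 1 ∨ s = -1) (ht : t = 1 ∨ t = -1) (hu : u = 1 ∨ u = -1) :
    lamRadial (min (min x y) z) / 4 ≤ |s * lamRadial x + t * lamRadial y + u * lamRadial z| := by
  rcases le_total z (min x y) with hz_min | hmin_z
  · rw [min_eq_right hz_min] at *
    exact (lamRadial_div_four_le_abs_signed_sum hz (hz_min.trans (min_le_left x y))
      (hz_min.trans (min_le_right x y)) hxy hmx hmy hu hs ht).trans_eq (congrArg abs (by ring))
  rw [min_eq_left hmin_z] at *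
  rcases le_total x y with hxy' | hyx
  · rw [min_eq_left hxy'] at *
    exact lamRadial_div_four_le_abs_signed_sum hx hxy' hmin_z hyz hmy hmz hs ht hu
  · rw [min_eq_right hyx] at *
    exact (lamRadial_div_four_le_abs_signed_sum hy hyx hmin_z hxz hmx hmz ht hs hu).trans_eq
      (congrArg abs (by ring))

theorem stmt8_general (U : ℝ) (ξ η : EuclideanSpace ℝ (Fin 2))
    (h1 : ‖ξ‖ ≤ U) (h2 : ‖η‖ ≤ U) (h3 : ‖ξ - η‖ ≤ U)
    (ha : min (min ‖ξ‖ ‖η‖) ‖ξ - η‖ ≤ 2 ^ (-10 : ℤ) * U⁻¹) :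
    ∀ σ μ ν : ℝ, (σ = 1 ∨ σ = -1) → (μ = 1 ∨ μ = -1) → (ν = 1 ∨ ν = -1) →
      Real.sqrt (min (min ‖ξ‖ ‖η‖) ‖ξ - η‖ + (min (min ‖ξ‖ ‖η‖) ‖ξ - η‖) ^ 3) / 4 ≤
        |σ * Lam ξ - μ * Lam (ξ - η) - ν * Lam η| := by
  intro σ μ ν hσ hμ hν
  have neg_sign : ∀ κ : ℝ, (κ = 1 ∨ κ = -1) → (-κ = 1 ∨ -κ = -1) := by
    rintro κ (rfl | rfl) <;> norm_num
  have hsmall : ∀ w, 0 ≤ w → w ≤ U → min (min ‖ξ‖ ‖η‖) ‖ξ - η‖ * w ≤ 2 ^ (-10 : ℤ) :=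
    fun w hw0 hwU ↦ calc
      _ ≤ 2 ^ (-10 : ℤ) * U⁻¹ * U :=
        mul_le_mul ha hwU hw0 (mul_nonneg (by positivity) (inv_nonneg.mpr (hw0.trans hwU)))
      _ = 2 ^ (-10 : ℤ) * (U⁻¹ * U) := mul_assoc _ _ _
      _ ≤ 2 ^ (-10 : ℤ) := mul_le_of_le_one_right (by positivity) inv_mul_le_one
  have hyz : |‖η‖ - ‖ξ - η‖| ≤ ‖ξ‖ := by
    simpa [norm_sub_rev η ξ] using abs_norm_sub_norm_le η (η - ξ)
  have hxz : |‖ξ‖ - ‖ξ - η‖| ≤ ‖η‖ := by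
    simpa using abs_norm_sub_norm_le ξ (ξ - η)
  rw [show σ * Lam ξ - μ * Lam (ξ - η) - ν * Lam η
    = σ * lamRadial ‖ξ‖ + -ν * lamRadial ‖η‖ + -μ * lamRadial ‖ξ - η‖ by
      simp only [Lam_eq_lamRadial]; ring]
  exact lamRadial_min_div_four_le_abs_signed_sum (norm_nonneg _) (norm_nonneg _) (norm_nonneg _)
    (abs_norm_sub_norm_le ξ η) hyz hxz (hsmall _ (norm_nonneg _) h1) (hsmall _ (norm_nonneg _) h2)
    (hsmall _ (norm_nonneg _) h3) hσ (neg_sign ν hν) (neg_sign μ hμ)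

/-- If U ≥ 1, max(|ξ|, |η|, |ξ − η|) ≤ U and a := min(|ξ|, |η|, |ξ − η|) ≤ 2⁻¹⁰U⁻¹, then
|σΛ(ξ) − μΛ(ξ − η) − νΛ(η)| ≥ √(a + a³)/4 for all signs σ, μ, ν ∈ {+1, −1}. -/
theorem stmt8 (U : ℝ) (hU : 1 ≤ U) (ξ η : EuclideanSpace ℝ (Fin 2))
    (h1 : ‖ξ‖ ≤ U) (h2 : ‖η‖ ≤ U) (h3 : ‖ξ - η‖ ≤ U)
    (ha : min (min ‖ξ‖ ‖η‖) ‖ξ - η‖ ≤ 2 ^ (-10 : ℤ) * U⁻¹) :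
    ∀ σ μ ν : ℝ, (σ = 1 ∨ σ = -1) → (μ = 1 ∨ μ = -1) → (ν = 1 ∨ ν = -1) →
      Real.sqrt (min (min ‖ξ‖ ‖η‖) ‖ξ - η‖ + (min (min ‖ξ‖ ‖η‖) ‖ξ - η‖) ^ 3) / 4 ≤
        |σ * Lam ξ - μ * Lam (ξ - η) - ν * Lam η| :=
  stmt8_general U ξ η h1 h2 h3 ha

end
end

section
/- Space-time resonances of the gravity–capillary phase: let σ, μ, ν ∈ {+1, −1}, and let ξ, η ∈ ℝ² with ξ ≠ 0, η ≠ 0 and η ≠ ξ. If Φ_{σμν}(ξ, η) = 0 and the gradient of the map η ↦ Φ_{σμν}(ξ, η) vanishes at η, then σ = μ = ν, η = ξ/2, and |ξ| = γ₁ := √2. -/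
/-!
Write `Λ ξ = g ‖ξ‖` with `g r = √(r + r³)`. The η-gradient of the phase is
`μ g'(‖ξ - η‖) (ξ - η)/‖ξ - η‖ - ν g'(‖η‖) η/‖η‖`, so at a critical point
`g'(‖ξ - η‖) = g'(‖η‖)` and `ξ - η`, `η` are parallel when `μ = ν` and antiparallel when
`μ = -ν`. In both cases the norms of `ξ - η`, `η`, `ξ` are `a`, `b`, `a + b` in some order, and
the vanishing of the phase becomes `g (a + b) = g a + g b`; squaring twice turns this into
`4 (1 + a²) (1 + b²) = 9 a b (a + b)²`. Squaring `g'(x) = g'(y)` gives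
`(x - y) C(x, y) = 0` for an explicit polynomial `C`, and the relation above makes both
`C(a, b)` and `C(a, a + b)` positive. So the antiparallel case is impossible, and in the
parallel case `a = b`, after which the relation reads `a² = 1/2`.
-/

noncomputable section

open Real

lemma eq_and_eq_of_sign_mul_eq_sign_mul {σ μ a b : ℝ} (hσ : σ = 1 ∨ σ = -1) (hμ : μ = 1 ∨ μ = -1)
    (ha : 0 < a) (hb : 0 < b) (h : σ * a = μ * b) : σ = μ ∧ a = b := by
  rcases hσ with rfl | rfl <;> rcases hμ with rfl | rfl <;> constructor <;> linarith

section
variable {E : Type*} [NormedAddCommGroup E] [InnerProductSpace ℝ E]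

lemma hasFDerivAt_norm_of_ne_zero {x : E} (hx : x ≠ 0) :
    HasFDerivAt (‖·‖) (innerSL ℝ (‖x‖⁻¹ • x)) x := by
  have hx' : 0 < ‖x‖ := norm_pos_iff.2 hx
  have h := (hasStrictFDerivAt_norm_sq x).hasFDerivAt.sqrt (by positivity)
  simp only [Real.sqrt_sq (norm_nonneg _)] at h
  refine h.congr_fderiv (ContinuousLinearMap.ext fun w => ?_)
  simp only [smul_apply, innerSL_apply_apply, real_inner_smul_left,
    smul_eq_mul, nsmul_eq_mul, Nat.cast_ofNat]
  field_simp

lemma eq_zero_of_innerSL_eq_zero {v : E} (h : innerSL ℝ v = 0) : v = 0 :=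
  norm_eq_zero.1 (by rw [← innerSL_apply_norm ℝ v, h, norm_zero])

end

section
variable {F : Type*} [NormedAddCommGroup F] [NormedSpace ℝ F]

lemma eq_and_sameRay_of_smul_eq_smul {u v : F} {μ ν s t : ℝ} (hu : u ≠ 0) (hv : v ≠ 0)
    (hμ : μ = 1 ∨ μ = -1) (hν : ν = 1 ∨ ν = -1) (hs : 0 < s) (ht : 0 < t)
    (h : (μ * (s / ‖u‖)) • u = (ν * (t / ‖v‖)) • v) :
    s = t ∧ SameRay ℝ u ((μ * ν) • v) := by
  have hμμ : μ * μ = 1 := by rcases hμ with rfl | rfl <;> norm_num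
  have hμν : |μ * ν| = 1 := by rcases hμ with rfl | rfl <;> rcases hν with rfl | rfl <;> norm_num
  have norm_smul_unit : ∀ {κ r : ℝ} {w : F}, (κ = 1 ∨ κ = -1) → 0 < r → w ≠ 0 →
      ‖(κ * (r / ‖w‖)) • w‖ = r := by
    intro κ r w hκ hr hw
    have hκ' : |κ| = 1 := by rcases hκ with rfl | rfl <;> norm_num
    rw [norm_smul, Real.norm_eq_abs, abs_mul, hκ', abs_div, abs_norm, abs_of_pos hr]
    field_simp [norm_ne_zero_iff.2 hw]
  have hst : s = t := by
    rw [← norm_smul_unit hμ hs hu, ← norm_smul_unit hν ht hv, h]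
  subst hst
  refine ⟨rfl, sameRay_iff_norm_smul_eq.2 ?_⟩
  have hscaled := congrArg (fun z => (μ * ‖u‖ * ‖v‖ / s) • z) h
  simp only [smul_smul] at hscaled
  rw [norm_smul, Real.norm_eq_abs, hμν, one_mul, smul_smul]
  convert hscaled.symm using 2 <;> field_simp [norm_ne_zero_iff.2 hu, norm_ne_zero_iff.2 hv]
  linear_combination -hμμ

end

namespace Lam

def radial (r : ℝ) : ℝ := √(r + r ^ 3)

def radialDeriv (r : ℝ) : ℝ := (1 + 3 * r ^ 2) / (2 * √(r + r ^ 3))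

variable {a b : ℝ}

lemma radial_pos (ha : 0 < a) : 0 < radial a := Real.sqrt_pos.2 (by positivity)

lemma radial_lt_radial (ha : 0 < a) (hab : a < b) : radial a < radial b := by
  have hb : 0 < b := ha.trans hab
  refine Real.sqrt_lt_sqrt (by positivity) ?_
  nlinarith [mul_pos (sub_pos.2 hab) (by positivity : 0 < a ^ 2 + a * b + b ^ 2)]

lemma radialDeriv_pos (ha : 0 < a) : 0 < radialDeriv a := by
  have := radial_pos ha
  unfold radial at this
  unfold radialDeriv
  positivity

lemma hasDerivAt_radial (ha : 0 < a) : HasDerivAt radial (radialDeriv a) a := by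
  have hpoly : HasDerivAt (fun s : ℝ => s + s ^ 3) (1 + 3 * a ^ 2) a := by
    simpa using (hasDerivAt_id' a).fun_add (hasDerivAt_pow 3 a)
  refine (hpoly.sqrt (by positivity)).congr_deriv ?_
  unfold radialDeriv
  ring

lemma resonance_poly_of_radial_add (ha : 0 < a) (hb : 0 < b)
    (h : radial (a + b) = radial a + radial b) :
    4 * (1 + a ^ 2) * (1 + b ^ 2) = 9 * a * b * (a + b) ^ 2 := by
  unfold radial at h
  have hA : √(a + a ^ 3) ^ 2 = a + a ^ 3 := Real.sq_sqrt (by positivity)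
  have hB : √(b + b ^ 3) ^ 2 = b + b ^ 3 := Real.sq_sqrt (by positivity)
  have hAB : √((a + b) + (a + b) ^ 3) ^ 2 = (a + b) + (a + b) ^ 3 :=
    Real.sq_sqrt (by positivity)
  have cross : 2 * (√(a + a ^ 3) * √(b + b ^ 3)) = 3 * a * b * (a + b) := by
    rw [h] at hAB
    nlinarith
  have cross_sq : 4 * (a + a ^ 3) * (b + b ^ 3) = 9 * a ^ 2 * b ^ 2 * (a + b) ^ 2 := by
    rw [← hA, ← hB]
    linear_combination (2 * (√(a + a ^ 3) * √(b + b ^ 3)) + 3 * a * b * (a + b)) * cross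
  have hab : a * b ≠ 0 := (mul_pos ha hb).ne'
  apply mul_left_cancel₀ hab
  linear_combination cross_sq

def velocityCofactor (a b : ℝ) : ℝ :=
  9 * a ^ 3 * b ^ 3 + 9 * a ^ 3 * b + 3 * a ^ 2 * b ^ 2 + 9 * a * b ^ 3 + 5 * a * b
    - a ^ 2 - b ^ 2 - 1

lemma sub_mul_velocityCofactor_eq_zero (ha : 0 < a) (hb : 0 < b)
    (h : radialDeriv a = radialDeriv b) : (a - b) * velocityCofactor a b = 0 := by
  unfold radialDeriv at h
  have hA : √(a + a ^ 3) ^ 2 = a + a ^ 3 := Real.sq_sqrt (by positivity)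
  have hB : √(b + b ^ 3) ^ 2 = b + b ^ 3 := Real.sq_sqrt (by positivity)
  have := radial_pos ha
  have := radial_pos hb
  unfold radial at *
  rw [div_eq_div_iff (by positivity) (by positivity)] at h
  have h2 := congrArg (· ^ 2) h
  simp only [mul_pow, hA, hB] at h2
  unfold velocityCofactor
  linear_combination h2 / 4

lemma velocityCofactor_pos (ha : 0 < a) (hb : 0 < b)
    (h : 4 * (1 + a ^ 2) * (1 + b ^ 2) = 9 * a * b * (a + b) ^ 2) :
    0 < velocityCofactor a b := by
  have hab : 0 < a * b := mul_pos ha hb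
  unfold velocityCofactor
  nlinarith [mul_nonneg hab.le (sq_nonneg (a * b - 1)), sq_nonneg (7 * (a * b) - 2),
    sq_nonneg (a - b)]

lemma velocityCofactor_add_pos (ha : 0 < a) (hb : 0 < b)
    (h : 4 * (1 + a ^ 2) * (1 + b ^ 2) = 9 * a * b * (a + b) ^ 2) :
    0 < velocityCofactor a (a + b) := by
  unfold velocityCofactor
  nlinarith [mul_pos ha hb, sq_nonneg (a - b), mul_pos (mul_pos ha ha) (mul_pos hb hb),
    mul_pos ha (mul_pos ha ha), sq_nonneg (a + b), mul_pos ha ha, mul_pos hb hb,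
    mul_pos (mul_pos ha ha) (by positivity : (0:ℝ) < (a + b) ^ 2)]

lemma eq_of_radial_add_of_radialDeriv_eq (ha : 0 < a) (hb : 0 < b)
    (h : radial (a + b) = radial a + radial b) (h' : radialDeriv a = radialDeriv b) : a = b := by
  have hC := velocityCofactor_pos ha hb (resonance_poly_of_radial_add ha hb h)
  rcases mul_eq_zero.1 (sub_mul_velocityCofactor_eq_zero ha hb h') with h | h <;> linarith

lemma radialDeriv_add_ne_of_radial_add (ha : 0 < a) (hb : 0 < b)
    (h : radial (a + b) = radial a + radial b) : radialDeriv a ≠ radialDeriv (a + b) := by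
  intro h'
  have hC := velocityCofactor_add_pos ha hb (resonance_poly_of_radial_add ha hb h)
  rcases mul_eq_zero.1 (sub_mul_velocityCofactor_eq_zero ha (by positivity) h') with h | h <;>
    linarith

lemma sq_eq_half_of_radial_add_self (ha : 0 < a) (h : radial (a + a) = radial a + radial a) :
    a ^ 2 = 1 / 2 := by
  nlinarith [resonance_poly_of_radial_add ha ha h, sq_nonneg a]

lemma radialDeriv_ne_add_of_sign_mul_radial_eq {σ μ : ℝ} (hσ : σ = 1 ∨ σ = -1)
    (hμ : μ = 1 ∨ μ = -1) (ha : 0 < a) (hb : 0 < b)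
    (hΦ : σ * radial b = μ * (radial (a + b) - radial a)) :
    radialDeriv a ≠ radialDeriv (a + b) := by
  have hgap : 0 < radial (a + b) - radial a := sub_pos.2 (radial_lt_radial ha (by linarith))
  obtain ⟨-, hsum⟩ := eq_and_eq_of_sign_mul_eq_sign_mul hσ hμ (radial_pos hb) hgap hΦ
  exact radialDeriv_add_ne_of_radial_add ha hb (by linarith)

section
variable {E : Type*} [NormedAddCommGroup E] [InnerProductSpace ℝ E]

lemma hasFDerivAt_radial_norm {x : E} (hx : x ≠ 0) :
    HasFDerivAt (fun y : E => radial ‖y‖) (innerSL ℝ ((radialDeriv ‖x‖ / ‖x‖) • x)) x := by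
  refine ((hasDerivAt_radial (norm_pos_iff.2 hx)).comp_hasFDerivAt x
    (hasFDerivAt_norm_of_ne_zero hx)).congr_fderiv (ContinuousLinearMap.ext fun w => ?_)
  simp only [smul_apply, innerSL_apply_apply, real_inner_smul_left, smul_eq_mul]
  ring

end

lemma hasFDerivAt_phase (σ μ ν : ℝ) {ξ η : EuclideanSpace ℝ (Fin 2)} (hη : η ≠ 0)
    (hξη : ξ - η ≠ 0) :
    HasFDerivAt (fun y : EuclideanSpace ℝ (Fin 2) => σ * Lam ξ - μ * Lam (ξ - y) - ν * Lam y)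
      (innerSL ℝ ((μ * (radialDeriv ‖ξ - η‖ / ‖ξ - η‖)) • (ξ - η)
        - (ν * (radialDeriv ‖η‖ / ‖η‖)) • η)) η := by
  have hsub := (hasFDerivAt_radial_norm hξη).comp η ((hasFDerivAt_id η).const_sub ξ)
  refine (((hasFDerivAt_const _ η).sub (hsub.const_mul μ)).sub
    ((hasFDerivAt_radial_norm hη).const_mul ν)).congr_fderiv
    (ContinuousLinearMap.ext fun w => ?_)
  simp only [sub_apply, smul_apply, ContinuousLinearMap.comp_apply,
    neg_apply, ContinuousLinearMap.id_apply, zero_apply,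
    innerSL_apply_apply, smul_eq_mul, inner_neg_right, inner_sub_left, real_inner_smul_left]
  ring

section
variable {F : Type*} [NormedAddCommGroup F] [NormedSpace ℝ F]

lemma resonance_of_sameRay {σ μ : ℝ} {u v : F} (hσ : σ = 1 ∨ σ = -1) (hμ : μ = 1 ∨ μ = -1)
    (hu : u ≠ 0) (hv : v ≠ 0) (hray : SameRay ℝ u v)
    (hΦ : σ * radial ‖u + v‖ = μ * (radial ‖u‖ + radial ‖v‖))
    (hd : radialDeriv ‖u‖ = radialDeriv ‖v‖) : σ = μ ∧ u = v ∧ ‖u + v‖ = √2 := by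
  have hu' : 0 < ‖u‖ := norm_pos_iff.2 hu
  have hv' : 0 < ‖v‖ := norm_pos_iff.2 hv
  rw [hray.norm_add] at hΦ ⊢
  obtain ⟨hσμ, hsum⟩ := eq_and_eq_of_sign_mul_eq_sign_mul hσ hμ (radial_pos (by positivity))
    (by linarith [radial_pos hu', radial_pos hv']) hΦ
  have huv : ‖u‖ = ‖v‖ := eq_of_radial_add_of_radialDeriv_eq hu' hv' hsum hd
  refine ⟨hσμ, hray.eq_of_norm_eq huv, ?_⟩
  rw [← huv] at hsum ⊢
  have hsq := sq_eq_half_of_radial_add_self hu' hsum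
  rw [show (2 : ℝ) = (‖u‖ + ‖u‖) ^ 2 by nlinarith, Real.sqrt_sq (by positivity)]

lemma not_resonance_of_sameRay_neg {σ μ : ℝ} {u v : F} (hσ : σ = 1 ∨ σ = -1)
    (hμ : μ = 1 ∨ μ = -1) (hu : u ≠ 0) (hv : v ≠ 0) (huv : u + v ≠ 0) (hray : SameRay ℝ u (-v))
    (hΦ : σ * radial ‖u + v‖ = μ * (radial ‖u‖ - radial ‖v‖))
    (hd : radialDeriv ‖u‖ = radialDeriv ‖v‖) : False := by
  have hu' : 0 < ‖u‖ := norm_pos_iff.2 hu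
  have hv' : 0 < ‖v‖ := norm_pos_iff.2 hv
  have hnorm : ‖u + v‖ = |‖u‖ - ‖v‖| := by simpa using hray.norm_sub
  have hμ' : -μ = 1 ∨ -μ = -1 := by rcases hμ with rfl | rfl <;> norm_num
  rw [hnorm] at hΦ
  rcases lt_trichotomy ‖u‖ ‖v‖ with hlt | heq | hgt
  · have hv_eq : ‖u‖ + (‖v‖ - ‖u‖) = ‖v‖ := by ring
    refine radialDeriv_ne_add_of_sign_mul_radial_eq hσ hμ' hu' (sub_pos.2 hlt) ?_ (by rwa [hv_eq])
    rw [abs_sub_comm, abs_of_pos (sub_pos.2 hlt)] at hΦ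
    rw [hv_eq, hΦ]
    ring
  · exact norm_ne_zero_iff.2 huv (by rw [hnorm, heq, sub_self, abs_zero])
  · have hu_eq : ‖v‖ + (‖u‖ - ‖v‖) = ‖u‖ := by ring
    refine radialDeriv_ne_add_of_sign_mul_radial_eq hσ hμ hv' (sub_pos.2 hgt) ?_
      (by rw [hu_eq, hd])
    rw [hu_eq, ← hΦ, abs_of_pos (sub_pos.2 hgt)]

lemma resonance_of_sameRay_smul {σ μ ν : ℝ} {u v : F} (hσ : σ = 1 ∨ σ = -1)
    (hμ : μ = 1 ∨ μ = -1) (hν : ν = 1 ∨ ν = -1) (hu : u ≠ 0) (hv : v ≠ 0) (huv : u + v ≠ 0)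
    (hray : SameRay ℝ u ((μ * ν) • v))
    (hΦ : σ * radial ‖u + v‖ - μ * radial ‖u‖ - ν * radial ‖v‖ = 0)
    (hd : radialDeriv ‖u‖ = radialDeriv ‖v‖) : σ = μ ∧ μ = ν ∧ u = v ∧ ‖u + v‖ = √2 := by
  have hνμ : ν = μ ∨ ν = -μ := by
    rcases hμ with rfl | rfl <;> rcases hν with rfl | rfl <;> norm_num
  rcases hνμ with rfl | rfl
  · have hνν : ν * ν = 1 := by rcases hν with rfl | rfl <;> norm_num
    rw [hνν, one_smul] at hray
    obtain ⟨hσν, heq, hnorm⟩ :=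
      resonance_of_sameRay hσ hν hu hv hray (by linear_combination hΦ) hd
    exact ⟨hσν, rfl, heq, hnorm⟩
  · have hμμ : μ * -μ = -1 := by rcases hμ with rfl | rfl <;> norm_num
    rw [hμμ, neg_one_smul] at hray
    exact (not_resonance_of_sameRay_neg hσ hμ hu hv huv hray (by linear_combination hΦ) hd).elim

end

end Lam

/-- Space-time resonances: if ξ ≠ 0, η ≠ 0, η ≠ ξ, Φ_{σμν}(ξ, η) = 0 and
∇_η Φ_{σμν}(ξ, η) = 0, then σ = μ = ν, η = ξ/2 and |ξ| = γ₁ = √2. -/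
theorem stmt11 (σ μ ν : ℝ) (hσ : σ = 1 ∨ σ = -1) (hμ : μ = 1 ∨ μ = -1) (hν : ν = 1 ∨ ν = -1)
    (ξ η : EuclideanSpace ℝ (Fin 2)) (hξ : ξ ≠ 0) (hη : η ≠ 0) (hηξ : η ≠ ξ)
    (hΦ : σ * Lam ξ - μ * Lam (ξ - η) - ν * Lam η = 0)
    (hgrad : fderiv ℝ (fun y : EuclideanSpace ℝ (Fin 2) =>
      σ * Lam ξ - μ * Lam (ξ - y) - ν * Lam y) η = 0) :
    σ = μ ∧ μ = ν ∧ η = (2 : ℝ)⁻¹ • ξ ∧ ‖ξ‖ = Real.sqrt 2 := by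
  have hξη : ξ - η ≠ 0 := sub_ne_zero.2 hηξ.symm
  have hcrit := eq_zero_of_innerSL_eq_zero ((Lam.hasFDerivAt_phase σ μ ν hη hξη).fderiv ▸ hgrad)
  obtain ⟨hd, hray⟩ := eq_and_sameRay_of_smul_eq_smul hξη hη hμ hν
    (Lam.radialDeriv_pos (norm_pos_iff.2 hξη)) (Lam.radialDeriv_pos (norm_pos_iff.2 hη))
    (sub_eq_zero.1 hcrit)
  obtain ⟨hσμ, hμν, hhalf, hnorm⟩ := Lam.resonance_of_sameRay_smul hσ hμ hν hξη hη
    (by rwa [sub_add_cancel]) hray (by rwa [sub_add_cancel]) hd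
  rw [sub_add_cancel] at hnorm
  refine ⟨hσμ, hμν, ?_, hnorm⟩
  rw [← sub_add_cancel ξ η, hhalf]
  module

end
end
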